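/- arXiv:1011.0846 — 4 statements merged into one kernel-verified Lean document; each statement's English description precedes it below -/
import Mathlib

section
/- Let s ≥ 0 and let a_0, ..., a_s be positive integers. Define e_i = Σ_{j=i}^{s} C(j,i)·a_j. Then for all 0 ≤ i ≤ s, one has 0 ≤ (i+1)·e_{i+1} ≤ (s - i)·e_i. -/
/-- If `a 0, …, a s` are positive integers and `e i = ∑_{j=i}^{s} C(j,i) * a j`,
then `0 ≤ (i+1) * e (i+1) ≤ (s - i) * e i` for all `0 ≤ i ≤ s`. -/
theorem stmt_3 (s : ℕ) (a : ℕ → ℤ) (ha : ∀ j ≤ s, 0 < a j)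
    (e : ℕ → ℤ) (he : ∀ i, e i = ∑ j ∈ Finset.Icc i s, (j.choose i : ℤ) * a j)
    (i : ℕ) (hi : i ≤ s) :
    0 ≤ (i + 1 : ℤ) * e (i + 1) ∧ (i + 1 : ℤ) * e (i + 1) ≤ ((s : ℤ) - i) * e i := by
  have e1 : ((i : ℤ) + 1) * e (i + 1)
      = ∑ j ∈ Finset.Icc (i + 1) s, ((j : ℤ) - i) * ((j.choose i : ℤ) * a j) := by
    rw [he, Finset.mul_sum]
    refine Finset.sum_congr rfl ?_
    intro j hj
    have hij : i ≤ j := le_trans (Nat.le_succ i) (Finset.mem_Icc.mp hj).1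
    have hc := congrArg (Nat.cast : ℕ → ℤ) (Nat.choose_succ_right_eq j i)
    push_cast [Nat.cast_sub hij] at hc
    linear_combination a j * hc
  have e0 : ((s : ℤ) - i) * e i
      = ∑ j ∈ Finset.Icc i s, ((s : ℤ) - i) * ((j.choose i : ℤ) * a j) := by
    rw [he, Finset.mul_sum]
  have hterm : ∀ j ∈ Finset.Icc i s, 0 ≤ ((s : ℤ) - i) * ((j.choose i : ℤ) * a j) := by
    intro j hj
    obtain ⟨h1, h2⟩ := Finset.mem_Icc.mp hj
    have := (ha j h2).le
    have hsi : (0 : ℤ) ≤ (s : ℤ) - i := by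
      have : (i : ℤ) ≤ s := by exact_mod_cast hi
      linarith
    positivity
  constructor
  · rw [e1]
    refine Finset.sum_nonneg ?_
    intro j hj
    obtain ⟨h1, h2⟩ := Finset.mem_Icc.mp hj
    have hji : (0 : ℤ) ≤ (j : ℤ) - i := by
      have : (i : ℤ) ≤ j := Nat.cast_le.mpr (le_trans (Nat.le_succ i) h1); linarith
    have := (ha j h2).le
    positivity
  · rw [e1, e0]
    calc ∑ j ∈ Finset.Icc (i + 1) s, ((j : ℤ) - i) * ((j.choose i : ℤ) * a j)
        ≤ ∑ j ∈ Finset.Icc (i + 1) s, ((s : ℤ) - i) * ((j.choose i : ℤ) * a j) := by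
          refine Finset.sum_le_sum ?_
          intro j hj
          obtain ⟨h1, h2⟩ := Finset.mem_Icc.mp hj
          have hjs : ((j : ℤ) - i) ≤ ((s : ℤ) - i) := by
            have : (j : ℤ) ≤ s := by exact_mod_cast h2
            linarith
          have ha' := (ha j h2).le
          have : (0 : ℤ) ≤ (j.choose i : ℤ) * a j := by positivity
          exact mul_le_mul_of_nonneg_right hjs this
      _ ≤ ∑ j ∈ Finset.Icc i s, ((s : ℤ) - i) * ((j.choose i : ℤ) * a j) := by
          refine Finset.sum_le_sum_of_subset_of_nonneg ?_ ?_
          · exact Finset.Icc_subset_Icc_left (Nat.le_succ i)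
          · intro j hj _; exact hterm j hj
end

section
/- Let a_0, ..., a_5 be positive integers and define e_i = Σ_{j=i}^{5} C(j,i)·a_j for 0 ≤ i ≤ 5. Then 10·e_0 ≥ 2·e_1 ≥ e_2 ≥ e_3 ≥ 2·e_4 ≥ 10·e_5 ≥ 0. -/
/-- For positive integers `a 0, …, a 5` and `e i = ∑_{j=i}^{5} C(j,i) * a j`
one has the chain `10 e₀ ≥ 2 e₁ ≥ e₂ ≥ e₃ ≥ 2 e₄ ≥ 10 e₅ ≥ 0`. -/
theorem stmt_5 (a : ℕ → ℤ) (ha : ∀ j ≤ 5, 0 < a j)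
    (e : ℕ → ℤ) (he : ∀ i, e i = ∑ j ∈ Finset.Icc i 5, (j.choose i : ℤ) * a j) :
    10 * e 0 ≥ 2 * e 1 ∧ 2 * e 1 ≥ e 2 ∧ e 2 ≥ e 3 ∧ e 3 ≥ 2 * e 4 ∧
      2 * e 4 ≥ 10 * e 5 ∧ 10 * e 5 ≥ 0 := by
  have h0 := ha 0 (by norm_num)
  have h1 := ha 1 (by norm_num)
  have h2 := ha 2 (by norm_num)
  have h3 := ha 3 (by norm_num)
  have h4 := ha 4 (by norm_num)
  have h5 := ha 5 (by norm_num)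
  have e0 := he 0; have e1 := he 1; have e2 := he 2
  have e3 := he 3; have e4 := he 4; have e5 := he 5
  norm_num [Finset.sum_Icc_succ_top, Nat.choose] at e0 e1 e2 e3 e4 e5
  refine ⟨?_, ?_, ?_, ?_, ?_, ?_⟩ <;> linarith
end

section
/- Let d ≥ 1, n ≥ 1, and 0 ≤ i ≤ d−1. In the expansion of p(n(X+1)−1) in the basis (−1)^i C(X+d−i, d−i), where p(X) = Σ_{i=0}^{d} (−1)^i e_i C(X+d−i, d−i), each coefficient e_i(I^n) is given by a polynomial expression in n of the form e_i(I^n) = Σ_{j=0}^{i} f_i^j(n)·e_j, where each f_i^j is a polynomial in n of degree d − j. -/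
/-!
Write `N_w = C(X + w, w)`. The functional `L_r p = (Δ^r p)(-r - 1)` is the coefficient of `N_r`
in the basis `(N_w)`, since `Δ N_{w+1} = N_w(X + 1)` and `N_w(-1) = δ_{w,0}`. The hypothesis is a
polynomial identity, so applying `L_{d-i}` gives
`(-1)^i g_i = ∑_{j ≤ i} (-1)^j e_j L_{d-i}(N_{d-j}(n(X + 1) - 1))`,
the terms `j > i` vanishing because `Δ^r` kills polynomials of degree `< r`. Expanding in powers
of `n`, `L_r(N_m(n(X + 1) - 1))` is a polynomial in `n` of degree `m` with leading coefficient
`L_r((X + 1)^m) / m! = ± r! S(m, r) / m!`, by the expansion of `X^m` in falling factorials with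
Stirling numbers of the second kind; this is nonzero as `1 ≤ r ≤ m`.
-/

open Polynomial Finset
open scoped fwdDiff Nat

theorem Nat.stirlingSecond_pos {m r : ℕ} (hr : 0 < r) (hrm : r ≤ m) :
    0 < m.stirlingSecond r := by
  induction m generalizing r with
  | zero => omega
  | succ m ih =>
    obtain ⟨k, rfl⟩ := Nat.exists_eq_add_of_lt hr
    rcases k.eq_zero_or_pos with rfl | hk
    · simp [stirlingSecond_one_right]
    · rw [zero_add, stirlingSecond_succ_succ]
      have := ih hk (by omega)
      positivity

theorem Polynomial.X_pow_eq_sum_stirlingSecond_mul_descPochhammer (R : Type*) [CommRing R]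
    (m : ℕ) :
    (X : R[X]) ^ m = ∑ k ∈ range (m + 1), (m.stirlingSecond k : R[X]) * descPochhammer R k := by
  induction m with
  | zero => simp
  | succ m ih =>
    have hX (k : ℕ) : X * descPochhammer R k =
        descPochhammer R (k + 1) + (k : R[X]) * descPochhammer R k := by
      rw [descPochhammer_succ_right]; ring
    have hshift : ∑ k ∈ range (m + 1), (m.stirlingSecond k : R[X]) * (k * descPochhammer R k) =
        ∑ k ∈ range (m + 1),
          ((k + 1) * m.stirlingSecond (k + 1) : R[X]) * descPochhammer R (k + 1) := by
      rw [sum_range_succ', sum_range_succ, Nat.stirlingSecond_eq_zero_of_lt (Nat.lt_succ_self m)]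
      simp [mul_left_comm, mul_assoc]
    rw [pow_succ', ih, mul_sum, sum_range_succ' _ (m + 1)]
    simp only [Nat.stirlingSecond_succ_succ, Nat.stirlingSecond_succ_zero, mul_left_comm X, hX,
      mul_add, sum_add_distrib, hshift]
    push_cast
    simp only [add_mul, sum_add_distrib]
    ring

theorem Polynomial.eq_of_eval_natCast_eq {K : Type*} [Field K] [CharZero K] {p q : K[X]}
    (h : ∀ x : ℕ, p.eval (x : K) = q.eval (x : K)) : p = q :=
  eq_of_infinite_eval_eq p q <| Set.infinite_of_injective_forall_mem Nat.cast_injective h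

section ChoosePoly

variable {K : Type*} [Field K]

variable (K) in
noncomputable def choosePoly (w : ℕ) : K[X] := (w ! : K)⁻¹ • (ascPochhammer K w).comp (X + 1)

theorem choosePoly_eval_natCast [CharZero K] (w x : ℕ) :
    (choosePoly K w).eval (x : K) = ((x + w).choose w : K) := by
  have h : (ascPochhammer K w).eval ((x + 1 : ℕ) : K) = (w ! * (x + w).choose w : ℕ) := by
    rw [← ascPochhammer_eval_cast, ascPochhammer_nat_eq_ascFactorial,
      Nat.ascFactorial_eq_factorial_mul_choose]
  simp only [choosePoly, eval_smul, eval_comp, eval_add, eval_X, eval_one, smul_eq_mul]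
  push_cast at h
  rw [h, inv_mul_cancel_left₀ (by exact_mod_cast w.factorial_ne_zero)]

theorem choosePoly_comp_eval_natCast [CharZero K] (w n x : ℕ) (hn : 1 ≤ n) :
    ((choosePoly K w).comp (C (n : K) * (X + 1) - 1)).eval (x : K) =
      ((n * (x + 1) - 1 + w).choose w : K) := by
  have hpos : 1 ≤ n * (x + 1) := Nat.mul_pos hn x.succ_pos
  rw [eval_comp, ← choosePoly_eval_natCast]
  push_cast [Nat.cast_sub hpos]
  simp

theorem sum_smul_choosePoly_eq_sum_smul_choosePoly_comp [CharZero K] {d n : ℕ} (hn : 1 ≤ n)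
    {a b : ℕ → ℤ}
    (h : ∀ x : ℕ, ∑ k ∈ range (d + 1), a k * ((x + d - k).choose (d - k) : ℤ) =
      ∑ k ∈ range (d + 1), b k * ((n * (x + 1) - 1 + d - k).choose (d - k) : ℤ)) :
    ∑ k ∈ range (d + 1), (a k : K) • choosePoly K (d - k) =
      ∑ k ∈ range (d + 1),
        (b k : K) • (choosePoly K (d - k)).comp (C (n : K) * (X + 1) - 1) := by
  refine eq_of_eval_natCast_eq fun x => ?_
  have hx := congrArg (Int.cast : ℤ → K) (h x)
  push_cast at hx
  simp only [eval_finsetSum, eval_smul, smul_eq_mul, choosePoly_eval_natCast,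
    choosePoly_comp_eval_natCast _ _ _ hn]
  convert hx using 2 with k hk k hk <;> rw [mem_range] at hk <;>
    rw [Nat.add_sub_assoc (by omega)]

theorem choosePoly_eval_neg_one (w : ℕ) :
    (choosePoly K w).eval (-1) = if w = 0 then 1 else 0 := by
  simp only [choosePoly, eval_smul, eval_comp, eval_add, eval_X, eval_one, neg_add_cancel,
    ascPochhammer_eval_zero, smul_eq_mul, mul_ite, mul_one, mul_zero]
  split_ifs with hw
  · rw [hw, Nat.factorial_zero, Nat.cast_one, inv_one]
  · rfl

theorem natDegree_choosePoly_le (w : ℕ) : (choosePoly K w).natDegree ≤ w := by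
  refine (natDegree_smul_le _ _).trans ?_
  rw [natDegree_comp, ascPochhammer_natDegree, ← C_1, natDegree_X_add_C, mul_one]

theorem choosePoly_comp_X_sub_one (w : ℕ) :
    (choosePoly K w).comp (X - 1) = (w ! : K)⁻¹ • ascPochhammer K w := by
  simp [choosePoly, smul_comp, comp_assoc]

theorem choosePoly_succ_comp_X_add_one [CharZero K] (w : ℕ) :
    (choosePoly K (w + 1)).comp (X + 1) =
      choosePoly K (w + 1) + (choosePoly K w).comp (X + 1) := by
  have hfac : ((w + 1)! : K)⁻¹ * (w + 1 : ℕ) = (w ! : K)⁻¹ := by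
    rw [Nat.factorial_succ, Nat.cast_mul, mul_inv, mul_right_comm,
      inv_mul_cancel₀ (by exact_mod_cast w.succ_ne_zero), one_mul]
  simp only [choosePoly, smul_comp]
  conv_lhs => rw [ascPochhammer_succ_comp_X_add_one]
  rw [add_comp, smul_add, smul_comp, ← Nat.cast_smul_eq_nsmul K, smul_smul, hfac]

theorem fwdDiff_eval_choosePoly_succ [CharZero K] (w : ℕ) :
    Δ_[1] (choosePoly K (w + 1)).eval = fun x : K => (choosePoly K w).eval (x + 1) := by
  ext x
  simpa [fwdDiff, sub_eq_iff_eq_add'] using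
    congrArg (eval x) (choosePoly_succ_comp_X_add_one (K := K) w)

theorem fwdDiff_iter_eval_choosePoly [CharZero K] (w r : ℕ) :
    (Δ_[1])^[r] (choosePoly K (w + r)).eval = fun x : K => (choosePoly K w).eval (x + r) := by
  induction r with
  | zero => simp
  | succ r ih =>
    ext x
    rw [Function.iterate_succ_apply, ← add_assoc, fwdDiff_eval_choosePoly_succ,
      fwdDiff_iter_comp_add 1 (choosePoly K (w + r)).eval, ih, Nat.cast_succ, ← add_assoc,
      add_right_comm]

theorem X_add_one_pow_eq_sum_smul_choosePoly [CharZero K] (m : ℕ) :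
    (X + 1 : K[X]) ^ m =
      ∑ k ∈ range (m + 1),
        ((-1) ^ (m + k) * m.stirlingSecond k * k ! : K) • choosePoly K k := by
  refine Polynomial.funext fun x => ?_
  have h := congrArg (eval (-(x + 1))) (X_pow_eq_sum_stirlingSecond_mul_descPochhammer K m)
  simp only [eval_pow, eval_X, eval_finsetSum, eval_mul, eval_natCast] at h
  simp only [eval_pow, eval_add, eval_X, eval_one, eval_finsetSum, eval_smul, smul_eq_mul,
    choosePoly, eval_comp]
  have hA (k : ℕ) : eval (x + 1) (ascPochhammer K k) =
      (-1) ^ k * eval (-(x + 1)) (descPochhammer K k) := by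
    rw [← ascPochhammer_eval_neg_eq_descPochhammer, neg_neg]
  have hpow : (x + 1) ^ m = (-1) ^ m * (-(x + 1)) ^ m := by
    rw [← mul_pow, neg_one_mul, neg_neg]
  simp only [hA, hpow, h, mul_sum]
  refine sum_congr rfl fun k _ => ?_
  rw [mul_assoc _ (k ! : K), mul_inv_cancel_left₀ (Nat.cast_ne_zero.mpr k.factorial_ne_zero)]
  ring_nf
  simp [pow_mul']

variable (K) in
/-- The coefficient of `choosePoly K r` in the basis `(choosePoly K w)_w` of `K[X]`. -/
noncomputable def choosePolyCoord (r : ℕ) : K[X] →ₗ[K] K where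
  toFun p := (Δ_[1])^[r] p.eval (-r - 1)
  map_add' p q := by
    rw [show (p + q).eval = p.eval + q.eval from funext fun x => eval_add]
    simp
  map_smul' a p := by
    rw [show (a • p).eval = a • p.eval from funext fun x => eval_smul ..]
    simp

theorem choosePolyCoord_apply (r : ℕ) (p : K[X]) :
    choosePolyCoord K r p = (Δ_[1])^[r] p.eval (-r - 1) := rfl

theorem choosePolyCoord_eq_zero_of_natDegree_lt {r : ℕ} {p : K[X]} (h : p.natDegree < r) :
    choosePolyCoord K r p = 0 := by
  rw [choosePolyCoord_apply, fwdDiff_iter_eq_zero_of_degree_lt h, Pi.zero_apply]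

theorem choosePolyCoord_choosePoly [CharZero K] (r w : ℕ) :
    choosePolyCoord K r (choosePoly K w) = if w = r then 1 else 0 := by
  rcases lt_or_ge w r with h | h
  · rw [choosePolyCoord_eq_zero_of_natDegree_lt ((natDegree_choosePoly_le w).trans_lt h),
      if_neg h.ne]
  · obtain ⟨v, rfl⟩ := Nat.exists_eq_add_of_le' h
    rw [choosePolyCoord_apply, fwdDiff_iter_eval_choosePoly]
    beta_reduce
    rw [show -(r : K) - 1 + r = -1 by ring, choosePoly_eval_neg_one]
    simp

theorem choosePolyCoord_X_add_one_pow [CharZero K] (r m : ℕ) :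
    choosePolyCoord K r ((X + 1) ^ m) = (-1) ^ (m + r) * m.stirlingSecond r * r ! := by
  simp only [X_add_one_pow_eq_sum_smul_choosePoly, map_sum, map_smul, choosePolyCoord_choosePoly,
    smul_eq_mul, mul_ite, mul_one, mul_zero, sum_ite_eq', mem_range]
  split_ifs with h
  · rfl
  · simp [Nat.stirlingSecond_eq_zero_of_lt (not_lt.mp h)]

theorem choosePolyCoord_sum_smul_choosePoly [CharZero K] {d i : ℕ} (hi : i ≤ d)
    (a : ℕ → K) :
    choosePolyCoord K (d - i) (∑ k ∈ range (d + 1), a k • choosePoly K (d - k)) = a i := by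
  simp only [map_sum, map_smul, choosePolyCoord_choosePoly, smul_eq_mul, mul_ite, mul_one,
    mul_zero]
  rw [sum_eq_single_of_mem i (mem_range.mpr (by omega)) fun k hk hki => ?_, if_pos rfl]
  rw [mem_range] at hk
  rw [if_neg (by omega)]

theorem choosePolyCoord_sum_smul_choosePoly_comp {d i : ℕ} (hi : i ≤ d) (a : ℕ → K)
    {q : K[X]} (hq : q.natDegree ≤ 1) :
    choosePolyCoord K (d - i) (∑ k ∈ range (d + 1), a k • (choosePoly K (d - k)).comp q) =
      ∑ k ∈ range (i + 1), a k * choosePolyCoord K (d - i) ((choosePoly K (d - k)).comp q) := by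
  simp only [map_sum, map_smul, smul_eq_mul]
  refine (sum_subset (range_subset_range.mpr (by omega)) fun k hkd hki => ?_).symm
  simp only [mem_range] at hkd hki
  have hdeg : ((choosePoly K (d - k)).comp q).natDegree < d - i :=
    calc _ ≤ (choosePoly K (d - k)).natDegree * q.natDegree := natDegree_comp_le
      _ ≤ (d - k) * 1 := Nat.mul_le_mul (natDegree_choosePoly_le _) hq
      _ < d - i := by omega
  rw [choosePolyCoord_eq_zero_of_natDegree_lt hdeg, mul_zero]

variable (K) in
noncomputable def choosePolyCoordScale (r : ℕ) (p : K[X]) : K[X] :=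
  ∑ s ∈ range (p.natDegree + 1), monomial s (p.coeff s * choosePolyCoord K r ((X + 1) ^ s))

theorem eval_choosePolyCoordScale (r : ℕ) (p : K[X]) (c : K) :
    (choosePolyCoordScale K r p).eval c = choosePolyCoord K r (p.comp (C c * (X + 1))) := by
  rw [comp, eval₂_eq_sum_range, choosePolyCoordScale, eval_finsetSum, map_sum]
  refine sum_congr rfl fun s _ => ?_
  rw [eval_monomial, mul_pow, ← C_pow, ← mul_assoc, ← C_mul, ← smul_eq_C_mul, map_smul,
    smul_eq_mul]
  ring

theorem coeff_choosePolyCoordScale (r : ℕ) (p : K[X]) (s : ℕ) :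
    (choosePolyCoordScale K r p).coeff s = p.coeff s * choosePolyCoord K r ((X + 1) ^ s) := by
  rw [choosePolyCoordScale, finsetSum_coeff]
  simp only [coeff_monomial, sum_ite_eq', mem_range]
  split_ifs with h
  · rfl
  · rw [coeff_eq_zero_of_natDegree_lt (by omega), zero_mul]

theorem degree_choosePolyCoordScale {r : ℕ} {p : K[X]} (hp : p ≠ 0)
    (h : choosePolyCoord K r ((X + 1) ^ p.natDegree) ≠ 0) :
    (choosePolyCoordScale K r p).degree = p.natDegree := by
  refine degree_eq_of_le_of_coeff_ne_zero ?_ ?_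
  · refine (degree_le_iff_coeff_zero _ _).mpr fun s hs => ?_
    rw [coeff_choosePolyCoordScale, coeff_eq_zero_of_natDegree_lt (by exact_mod_cast hs),
      zero_mul]
  · rw [coeff_choosePolyCoordScale]
    exact mul_ne_zero (leadingCoeff_ne_zero.mpr hp) h

theorem degree_choosePolyCoordScale_choosePoly_comp [CharZero K] {r w : ℕ} (hr : 0 < r)
    (hrw : r ≤ w) : (choosePolyCoordScale K r ((choosePoly K w).comp (X - 1))).degree = w := by
  have hfac : (w ! : K)⁻¹ ≠ 0 := inv_ne_zero (Nat.cast_ne_zero.mpr w.factorial_ne_zero)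
  have hdeg : ((choosePoly K w).comp (X - 1)).natDegree = w := by
    rw [choosePoly_comp_X_sub_one, natDegree_smul _ hfac, ascPochhammer_natDegree]
  rw [degree_choosePolyCoordScale, hdeg]
  · rw [choosePoly_comp_X_sub_one]
    exact smul_ne_zero hfac (monic_ascPochhammer K w).ne_zero
  · rw [hdeg, choosePolyCoord_X_add_one_pow]
    have hS : (w.stirlingSecond r : K) ≠ 0 :=
      Nat.cast_ne_zero.mpr (Nat.stirlingSecond_pos hr hrw).ne'
    exact mul_ne_zero (mul_ne_zero (pow_ne_zero _ (neg_ne_zero.mpr one_ne_zero)) hS)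
      (Nat.cast_ne_zero.mpr r.factorial_ne_zero)

end ChoosePoly

/-- Let `d ≥ 1`, `n ≥ 1` and `0 ≤ i ≤ d-1`.  If
`p(X) = ∑_{k=0}^{d} (-1)^k e_k C(X+d-k, d-k)` and `g_0, …, g_d` are the
coefficients of the expansion of `p(n(X+1)-1)` in the alternating binomial
basis, then `g_i = ∑_{j=0}^{i} f_i^j(n) e_j` where each `f_i^j` is a
(rational) polynomial in `n` of degree `d - j`, independent of `e` and `n`. -/
theorem stmt_8 (d : ℕ) (hd : 1 ≤ d) (i : ℕ) (hi : i ≤ d - 1) :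
    ∃ f : ℕ → Polynomial ℚ,
      (∀ j ≤ i, (f j).degree = (d - j : ℕ)) ∧
      ∀ (e : ℕ → ℤ) (n : ℕ), 1 ≤ n →
        ∀ g : ℕ → ℤ,
          (∀ X : ℕ,
            (∑ k ∈ Finset.range (d + 1),
                (-1 : ℤ) ^ k * g k * ((X + d - k).choose (d - k) : ℤ)) =
              ∑ k ∈ Finset.range (d + 1),
                (-1 : ℤ) ^ k * e k * ((n * (X + 1) - 1 + d - k).choose (d - k) : ℤ)) →
          (g i : ℚ) = ∑ j ∈ Finset.range (i + 1), (f j).eval (n : ℚ) * (e j : ℚ) := by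
  refine ⟨fun j => C ((-1) ^ (i + j)) *
      choosePolyCoordScale ℚ (d - i) ((choosePoly ℚ (d - j)).comp (X - 1)),
    fun j hj => ?_, fun e n hn g hX => ?_⟩
  · rw [degree_C_mul (by simp), degree_choosePolyCoordScale_choosePoly_comp (by omega) (by omega)]
  have hpoly := sum_smul_choosePoly_eq_sum_smul_choosePoly_comp (K := ℚ) hn hX
  have hq : (C (n : ℚ) * (X + 1) - 1).natDegree ≤ 1 := by compute_degree
  have hcoord := congrArg (choosePolyCoord ℚ (d - i)) hpoly
  rw [choosePolyCoord_sum_smul_choosePoly (by omega),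
    choosePolyCoord_sum_smul_choosePoly_comp (by omega) _ hq] at hcoord
  push_cast at hcoord
  simp only [eval_mul, eval_C, eval_choosePolyCoordScale, comp_assoc, sub_comp, X_comp, one_comp]
  calc (g i : ℚ) = (-1) ^ i * ((-1) ^ i * g i) := by
        rw [← mul_assoc, ← pow_add, ← two_mul, pow_mul, neg_one_sq, one_pow, one_mul]
    _ = _ := by
      rw [hcoord, mul_sum]
      refine sum_congr rfl fun j _ => ?_
      ring
end

section
/- Let R = k[x,y]/(y² − x^n) localized at (x,y), with n ≥ 8 and k a field. Let I be the ideal of R generated by x⁶ and x²y. Then the Hilbert–Samuel polynomial of I is p_I(t) = 12t − 4 for t ≫ 0; that is, e_0(I) = 12 and e_1(I) = 16 − 12 = 4 in the normalization length(R/I^{t+1}) = e_0(I)(t+1) − e_1(I). -/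
/-!
Since `y² = xⁿ`, the ring `A = k[x, y]/(y² - xⁿ)` is free over `k[x]` with basis `1, y`. In these
coordinates, for `b ≤ a ≤ b + n`, the ideal `(x ^ a, x ^ b y)` consists of the `p₀(x) + p₁(x) y`
with `x ^ a ∣ p₀` and `x ^ b ∣ p₁`. So its quotient has `k`-dimension `a + b`, which bounds the
length, while lowering the exponents one at a time gives a strict chain of `a + b` ideals above it;
the colength is `a + b`. For `n ≥ 8` the powers of `I = (x⁶, x²y)` have this shape,
`I ^ (t + 1) = (x ^ (6t + 6), x ^ (6t + 2) y)`, of colength `12t + 8`. Finally `x` and `y` are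
nilpotent modulo such an ideal, so everything outside `m = (x, y)` is a unit there and localizing
at `m` does not change the quotient.
-/

noncomputable def moduleLength (R M : Type*) [Ring R] [AddCommGroup M] [Module R M] :
    WithBot ℕ∞ :=
  Order.krullDim (Submodule R M)

theorem Module.length_le_length_of_isScalarTower (k A M : Type*) [Ring k] [Ring A]
    [AddCommGroup M] [SMul k A] [Module k M] [Module A M] [IsScalarTower k A M] :
    Module.length A M ≤ Module.length k M := by
  rw [← WithBot.coe_le_coe, Module.coe_length, Module.coe_length]
  exact Order.krullDim_le_of_orderEmbedding (Submodule.restrictScalarsEmbedding k A M)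

theorem IsLocalization.length_quotient_map {A R : Type*} [CommRing A] [CommRing R] [Algebra A R]
    (M : Submonoid A) [IsLocalization M R] (T : Ideal A)
    (hT : ∀ s ∈ M, IsUnit (Ideal.Quotient.mk T s)) :
    Module.length R (R ⧸ T.map (algebraMap A R)) = Module.length A (A ⧸ T) := by
  set J := T.map (algebraMap A R)
  have e : (A ⧸ T) ≃ₐ[A ⧸ T] R ⧸ J :=
    IsLocalization.atUnits (A ⧸ T) (Algebra.algebraMapSubmonoid (A ⧸ T) M) (by
      rintro _ ⟨s, hs, rfl⟩
      exact hT s hs)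
  calc Module.length R (R ⧸ J)
      = Module.length (R ⧸ J) (R ⧸ J) :=
        Module.length_eq_of_surjective Ideal.Quotient.mk_surjective
    _ = Module.length (A ⧸ T) (R ⧸ J) := (Module.length_eq_of_surjective fun z ↦
        ⟨e.symm z, by simpa using (e.commutes (e.symm z)).symm⟩).symm
    _ = Module.length (A ⧸ T) (A ⧸ T) := e.toLinearEquiv.symm.length_eq
    _ = Module.length A (A ⧸ T) :=
        (Module.length_eq_of_surjective Ideal.Quotient.mk_surjective).symm

theorem Ideal.isUnit_mk_of_sub_algebraMap_mem {k A : Type*} [Field k] [CommRing A] [Algebra k A]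
    {m T : Ideal A} (hmT : m ≤ T.radical) {u : A} {c : k} (hc : c ≠ 0)
    (hu : u - algebraMap k A c ∈ m) : IsUnit (Ideal.Quotient.mk T u) := by
  obtain ⟨N, hN⟩ := hmT hu
  have hnil : IsNilpotent (Ideal.Quotient.mk T (u - algebraMap k A c)) :=
    ⟨N, by rw [← map_pow, Ideal.Quotient.eq_zero_iff_mem]; exact hN⟩
  have hunit : IsUnit (Ideal.Quotient.mk T (algebraMap k A c)) :=
    (hc.isUnit.map (algebraMap k A)).map _
  simpa [← map_add] using hnil.isUnit_add_left_of_commute hunit (Commute.all _ _)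

section MonomialIdeal

variable {A : Type*} [CommRing A]

def monomialIdeal (x y : A) (a b : ℕ) : Ideal A := Ideal.span {x ^ a, x ^ b * y}

variable {x y : A} {a b c d : ℕ}

theorem pow_mem_monomialIdeal (h : a ≤ c) : x ^ c ∈ monomialIdeal x y a b := by
  rw [← Nat.sub_add_cancel h, pow_add]
  exact Ideal.mul_mem_left _ _ (Ideal.subset_span (by simp))

theorem pow_mul_mem_monomialIdeal (h : b ≤ c) : x ^ c * y ∈ monomialIdeal x y a b := by
  rw [← Nat.sub_add_cancel h, pow_add, mul_assoc]
  exact Ideal.mul_mem_left _ _ (Ideal.subset_span (by simp))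

theorem monomialIdeal_le_monomialIdeal (ha : c ≤ a) (hb : d ≤ b) :
    monomialIdeal x y a b ≤ monomialIdeal x y c d := by
  rw [monomialIdeal, Ideal.span_le]
  rintro z (rfl | rfl)
  exacts [pow_mem_monomialIdeal ha, pow_mul_mem_monomialIdeal hb]

theorem monomialIdeal_mul {n : ℕ} (hyx : y ^ 2 = x ^ n) (h₁ : d + a ≤ c + b)
    (h₂ : c + a ≤ d + b + n) :
    monomialIdeal x y c d * monomialIdeal x y a b = monomialIdeal x y (c + a) (d + a) := by
  apply le_antisymm
  · rw [monomialIdeal, monomialIdeal, Ideal.span_pair_mul_span_pair, Ideal.span_le]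
    have hyy : x ^ d * y * (x ^ b * y) = x ^ (d + b + n) := by
      rw [pow_add, pow_add, ← hyx]; ring
    simp only [Set.insert_subset_iff, Set.singleton_subset_iff, SetLike.mem_coe]
    refine ⟨?_, ?_, ?_, ?_⟩
    · rw [← pow_add]; exact pow_mem_monomialIdeal le_rfl
    · rw [← mul_assoc, ← pow_add]; exact pow_mul_mem_monomialIdeal h₁
    · rw [mul_right_comm, ← pow_add]; exact pow_mul_mem_monomialIdeal le_rfl
    · rw [hyy]; exact pow_mem_monomialIdeal h₂
  · rw [monomialIdeal, Ideal.span_le]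
    rintro z (rfl | rfl)
    · rw [pow_add]
      exact Ideal.mul_mem_mul (pow_mem_monomialIdeal le_rfl) (pow_mem_monomialIdeal le_rfl)
    · rw [pow_add, mul_right_comm]
      exact Ideal.mul_mem_mul (pow_mul_mem_monomialIdeal le_rfl) (pow_mem_monomialIdeal le_rfl)

theorem monomialIdeal_pow {n : ℕ} (hyx : y ^ 2 = x ^ n) (h : 2 * a ≤ 2 * b + n) (t : ℕ) :
    monomialIdeal x y a b ^ (t + 1) = monomialIdeal x y (a * (t + 1)) (a * t + b) := by
  induction t with
  | zero => simp
  | succ t ih =>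
    rw [pow_succ, ih, monomialIdeal_mul hyx (by nlinarith) (by nlinarith)]
    congr 1
    ring

theorem span_le_radical_monomialIdeal {n : ℕ} (hyx : y ^ 2 = x ^ n) (hn : 0 < n) :
    Ideal.span {x, y} ≤ (monomialIdeal x y a b).radical := by
  rw [Ideal.span_le]
  rintro z (rfl | rfl)
  · exact ⟨a, pow_mem_monomialIdeal le_rfl⟩
  · refine ⟨2 * a, ?_⟩
    rw [pow_mul, hyx, ← pow_mul]
    exact pow_mem_monomialIdeal (Nat.le_mul_of_pos_left a hn)

end MonomialIdeal

section PolynomialCoordinates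

open Polynomial

variable {k A : Type*} [Field k] [CommRing A] [Algebra k A] {x y : A} {n a b : ℕ}

theorem aeval_add_aeval_mul_sub_algebraMap_coeff_zero_mem (x y : A) (p₀ p₁ : k[X]) :
    aeval x p₀ + aeval x p₁ * y - algebraMap k A (p₀.coeff 0) ∈ Ideal.span {x, y} := by
  have h : aeval x p₀ = x * aeval x p₀.divX + algebraMap k A (p₀.coeff 0) := by
    conv_lhs => rw [← X_mul_divX_add p₀]
    rw [map_add, map_mul, aeval_X, aeval_C]
  rw [h, add_sub_right_comm, add_sub_cancel_right]
  exact Ideal.add_mem _ (Ideal.mul_mem_right _ _ (Ideal.subset_span (by simp)))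
    (Ideal.mul_mem_left _ _ (Ideal.subset_span (by simp)))

theorem aeval_add_aeval_mul_mem_monomialIdeal {p₀ p₁ : k[X]} (h₀ : X ^ a ∣ p₀)
    (h₁ : X ^ b ∣ p₁) : aeval x p₀ + aeval x p₁ * y ∈ monomialIdeal x y a b := by
  obtain ⟨q₀, rfl⟩ := h₀
  obtain ⟨q₁, rfl⟩ := h₁
  simp only [map_mul, map_pow, aeval_X]
  rw [mul_right_comm (x ^ b)]
  exact Ideal.add_mem _ (Ideal.mul_mem_right _ _ (pow_mem_monomialIdeal le_rfl))
    (Ideal.mul_mem_right _ _ (pow_mul_mem_monomialIdeal le_rfl))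

theorem aeval_add_aeval_mul_mem_monomialIdeal_iff (hyx : y ^ 2 = x ^ n)
    (hbasis : Function.Bijective fun p : k[X] × k[X] ↦ aeval x p.1 + aeval x p.2 * y)
    (hba : b ≤ a) (hab : a ≤ b + n) (p₀ p₁ : k[X]) :
    aeval x p₀ + aeval x p₁ * y ∈ monomialIdeal x y a b ↔ X ^ a ∣ p₀ ∧ X ^ b ∣ p₁ := by
  refine ⟨fun h ↦ ?_, fun h ↦ aeval_add_aeval_mul_mem_monomialIdeal h.1 h.2⟩
  obtain ⟨c, d, hcd⟩ := Ideal.mem_span_pair.mp h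
  obtain ⟨⟨c₀, c₁⟩, rfl⟩ := hbasis.2 c
  obtain ⟨⟨d₀, d₁⟩, rfl⟩ := hbasis.2 d
  -- multiplying out, `y ^ 2 = x ^ n` moves the `c₁ y` and `d₁ y` terms into the other coordinate
  have key := @hbasis.1 (X ^ a * (c₀ + X ^ (b + n - a) * d₁), X ^ b * (d₀ + X ^ (a - b) * c₁))
    (p₀, p₁) (by
      simp only [map_mul, map_add, map_pow, aeval_X]
      rw [← hcd]
      have e₁ : x ^ a * x ^ (b + n - a) = x ^ b * x ^ n := by
        rw [← pow_add, ← pow_add]; congr 1; omega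
      have e₂ : x ^ b * x ^ (a - b) = x ^ a := by
        rw [← pow_add]; congr 1; omega
      linear_combination (aeval x c₁ * y) * e₂ + aeval x d₁ * e₁ - aeval x d₁ * x ^ b * hyx)
  simp only [Prod.mk.injEq] at key
  exact ⟨⟨_, key.1.symm⟩, ⟨_, key.2.symm⟩⟩

theorem monomialIdeal_add_one_left_lt (hyx : y ^ 2 = x ^ n)
    (hbasis : Function.Bijective fun p : k[X] × k[X] ↦ aeval x p.1 + aeval x p.2 * y)
    (hba : b ≤ a + 1) (hab : a + 1 ≤ b + n) :
    monomialIdeal x y (a + 1) b < monomialIdeal x y a b := by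
  refine SetLike.lt_iff_le_and_exists.mpr ⟨monomialIdeal_le_monomialIdeal (by omega) le_rfl,
    x ^ a, pow_mem_monomialIdeal le_rfl, ?_⟩
  have h := aeval_add_aeval_mul_mem_monomialIdeal_iff hyx hbasis hba hab (X ^ a) 0
  simp only [map_pow, aeval_X, map_zero, zero_mul, add_zero] at h
  rw [h, pow_dvd_pow_iff X_ne_zero not_isUnit_X]
  exact fun h ↦ absurd h.1 (by omega)

theorem monomialIdeal_add_one_right_lt (hyx : y ^ 2 = x ^ n)
    (hbasis : Function.Bijective fun p : k[X] × k[X] ↦ aeval x p.1 + aeval x p.2 * y)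
    (hba : b + 1 ≤ a) (hab : a ≤ b + 1 + n) :
    monomialIdeal x y a (b + 1) < monomialIdeal x y a b := by
  refine SetLike.lt_iff_le_and_exists.mpr ⟨monomialIdeal_le_monomialIdeal le_rfl (by omega),
    x ^ b * y, pow_mul_mem_monomialIdeal le_rfl, ?_⟩
  have h := aeval_add_aeval_mul_mem_monomialIdeal_iff hyx hbasis hba hab 0 (X ^ b)
  simp only [map_pow, aeval_X, map_zero, zero_add] at h
  rw [h, pow_dvd_pow_iff X_ne_zero not_isUnit_X]
  exact fun h ↦ absurd h.2 (by omega)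

theorem add_le_coheight_monomialIdeal (hyx : y ^ 2 = x ^ n)
    (hbasis : Function.Bijective fun p : k[X] × k[X] ↦ aeval x p.1 + aeval x p.2 * y)
    (hn : 0 < n) (hba : b ≤ a) (hab : a ≤ b + n) :
    ((a + b : ℕ) : ℕ∞) ≤ Order.coheight (monomialIdeal x y a b) := by
  induction h : a + b generalizing a b with
  | zero => simp
  | succ s ih =>
    have step {a' b' : ℕ} (hs : a' + b' = s) (hba' : b' ≤ a') (hab' : a' ≤ b' + n)
        (hlt : monomialIdeal x y a b < monomialIdeal x y a' b') :
        ((s + 1 : ℕ) : ℕ∞) ≤ Order.coheight (monomialIdeal x y a b) := by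
      push_cast
      exact (add_le_add_left (ih hba' hab' hs) 1).trans (Order.coheight_add_one_le hlt)
    obtain hlt | rfl := hba.lt_or_eq
    · obtain ⟨a, rfl⟩ := Nat.exists_eq_add_one_of_ne_zero (by omega : a ≠ 0)
      exact step (by omega) (by omega) (by omega) (monomialIdeal_add_one_left_lt hyx hbasis hba hab)
    · obtain ⟨b, rfl⟩ := Nat.exists_eq_add_one_of_ne_zero (by omega : b ≠ 0)
      exact step (by omega) (by omega) (by omega)
        (monomialIdeal_add_one_right_lt hyx hbasis hba hab)

theorem length_quotient_monomialIdeal_le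
    (hspan : Function.Surjective fun p : k[X] × k[X] ↦ aeval x p.1 + aeval x p.2 * y) :
    Module.length A (A ⧸ monomialIdeal x y a b) ≤ a + b := by
  -- every class has a representative `p₀(x) + p₁(x) y` with `deg p₀ < a` and `deg p₁ < b`
  let φ : (degreeLT k a × degreeLT k b) →ₗ[k] A ⧸ monomialIdeal x y a b :=
    (Ideal.Quotient.mkₐ k _).toLinearMap ∘ₗ
      (((aeval x).toLinearMap ∘ₗ (degreeLT k a).subtype).coprod
        (LinearMap.mulRight k y ∘ₗ (aeval x).toLinearMap ∘ₗ (degreeLT k b).subtype))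
  have hφ : Function.Surjective φ := by
    intro z
    obtain ⟨w, rfl⟩ := Ideal.Quotient.mk_surjective z
    obtain ⟨⟨p₀, p₁⟩, rfl⟩ := hspan w
    have hmod (p : k[X]) (c : ℕ) : p %ₘ X ^ c ∈ degreeLT k c := by
      rw [mem_degreeLT, ← degree_X_pow (R := k) c]
      exact degree_modByMonic_lt p (monic_X_pow c)
    refine ⟨(⟨_, hmod p₀ a⟩, ⟨_, hmod p₁ b⟩), Ideal.Quotient.eq.mpr ?_⟩
    have h := aeval_add_aeval_mul_mem_monomialIdeal (x := x) (y := y)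
      (dvd_modByMonic_sub p₀ (X ^ a)) (dvd_modByMonic_sub p₁ (X ^ b))
    simp only [map_sub, sub_mul] at h
    convert h using 1
    simp only [LinearMap.coprod_apply, LinearMap.coe_comp, AlgHom.coe_toLinearMap,
      Submodule.coe_subtype, Function.comp_apply, LinearMap.mulRight_apply]
    ring
  calc Module.length A (A ⧸ monomialIdeal x y a b)
      ≤ Module.length k (A ⧸ monomialIdeal x y a b) :=
        Module.length_le_length_of_isScalarTower k A _
    _ ≤ Module.length k (degreeLT k a × degreeLT k b) := Module.length_le_of_surjective φ hφ
    _ = a + b := by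
      rw [Module.length_prod, (degreeLTEquiv k a).length_eq, (degreeLTEquiv k b).length_eq,
        Module.length_eq_finrank, Module.length_eq_finrank, Module.finrank_fin_fun,
        Module.finrank_fin_fun]

theorem length_quotient_monomialIdeal (hyx : y ^ 2 = x ^ n)
    (hbasis : Function.Bijective fun p : k[X] × k[X] ↦ aeval x p.1 + aeval x p.2 * y)
    (hn : 0 < n) (hba : b ≤ a) (hab : a ≤ b + n) :
    Module.length A (A ⧸ monomialIdeal x y a b) = a + b := by
  refine le_antisymm (length_quotient_monomialIdeal_le hbasis.2) ?_
  rw [Module.length_quotient]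
  exact_mod_cast add_le_coheight_monomialIdeal hyx hbasis hn hba hab

end PolynomialCoordinates

section Presentation

open Polynomial

variable {k A : Type*} [Field k] [CommRing A] [Algebra k A] {n : ℕ}
  {q : MvPolynomial (Fin 2) k →ₐ[k] A} {x y : A}

theorem sq_eq_pow_of_ker_eq
    (hker : RingHom.ker q = Ideal.span {MvPolynomial.X 1 ^ 2 - MvPolynomial.X 0 ^ n})
    (hx : q (MvPolynomial.X 0) = x) (hy : q (MvPolynomial.X 1) = y) :
    y ^ 2 = x ^ n := by
  have h : MvPolynomial.X 1 ^ 2 - MvPolynomial.X 0 ^ n ∈ RingHom.ker q :=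
    hker ▸ Ideal.mem_span_singleton_self _
  rwa [RingHom.mem_ker, map_sub, map_pow, map_pow, hx, hy, sub_eq_zero] at h

theorem surjective_aeval_add_aeval_mul (hq : Function.Surjective q)
    (hx : q (MvPolynomial.X 0) = x) (hy : q (MvPolynomial.X 1) = y) (hyx : y ^ 2 = x ^ n) :
    Function.Surjective fun p : k[X] × k[X] ↦ aeval x p.1 + aeval x p.2 * y := by
  intro z
  obtain ⟨F, rfl⟩ := hq z
  induction F using MvPolynomial.induction_on with
  | C c => exact ⟨(C c, 0), by simp⟩
  | add F G hF hG =>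
    obtain ⟨p, hp⟩ := hF
    obtain ⟨p', hp'⟩ := hG
    refine ⟨p + p', ?_⟩
    simp only [Prod.fst_add, Prod.snd_add, map_add] at hp hp' ⊢
    rw [← hp, ← hp']
    ring
  | mul_X F i hF =>
    obtain ⟨⟨p₀, p₁⟩, hp⟩ := hF
    simp only at hp
    fin_cases i
    · refine ⟨(X * p₀, X * p₁), ?_⟩
      simp only [map_mul, aeval_X, ← hp, Fin.zero_eta, hx]
      ring
    · refine ⟨(X ^ n * p₁, p₀), ?_⟩
      simp only [map_mul, map_pow, aeval_X, ← hp, Fin.mk_one, hy]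
      linear_combination -aeval x p₁ * hyx

theorem injective_aeval_add_aeval_mul
    (hker : RingHom.ker q = Ideal.span {MvPolynomial.X 1 ^ 2 - MvPolynomial.X 0 ^ n})
    (hx : q (MvPolynomial.X 0) = x) (hy : q (MvPolynomial.X 1) = y) :
    Function.Injective fun p : k[X] × k[X] ↦ aeval x p.1 + aeval x p.2 * y := by
  rintro ⟨p₀, p₁⟩ ⟨p₀', p₁'⟩ h
  simp only at h
  -- map `k[x, y]` to `k[x][y]`, where `y ^ 2 - x ^ n` is monic of degree 2 in `y`
  let Ψ : MvPolynomial (Fin 2) k →ₐ[k] k[X][X] := MvPolynomial.aeval ![(C X : k[X][X]), X]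
  have hΨ (p : k[X]) : Ψ (aeval (MvPolynomial.X 0 : MvPolynomial (Fin 2) k) p) = C p := by
    rw [← aeval_algHom_apply, MvPolynomial.aeval_X, Matrix.cons_val_zero, ← algebraMap_eq,
      aeval_algebraMap_apply, aeval_X_left_apply, algebraMap_eq]
  have hmem : (MvPolynomial.X 1 ^ 2 - MvPolynomial.X 0 ^ n : MvPolynomial (Fin 2) k) ∣
      aeval (MvPolynomial.X 0) (p₀ - p₀') +
        aeval (MvPolynomial.X 0) (p₁ - p₁') * MvPolynomial.X 1 := by
    rw [← Ideal.mem_span_singleton, ← hker, RingHom.mem_ker]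
    simp only [map_add, map_mul, map_sub, ← aeval_algHom_apply, hx, hy]
    linear_combination h
  have hdvd : X ^ 2 - C (X ^ n) ∣ C (p₁ - p₁') * X + C (p₀ - p₀') := by
    have := map_dvd Ψ hmem
    simp only [map_add, map_mul, map_sub, map_pow, hΨ] at this
    simpa [Ψ, add_comm] using this
  have hzero := eq_zero_of_dvd_of_degree_lt hdvd <| by
    rw [degree_X_pow_sub_C two_pos]
    exact degree_linear_le.trans_lt (by norm_num)
  have h₀ : p₀ - p₀' = 0 := by simpa using congrArg (coeff · 0) hzero
  have h₁ : p₁ - p₁' = 0 := by simpa using congrArg (coeff · 1) hzero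
  rw [sub_eq_zero] at h₀ h₁
  rw [h₀, h₁]

end Presentation

open MvPolynomial in
/-- Let `R = k[x,y]_{(x,y)}/(y² − xⁿ)` with `n ≥ 8`, and let
`I = (x⁶, x²y) ⊆ R`.  Then the Hilbert–Samuel function of `I` satisfies
`length_R (R/I^(t+1)) = 12(t+1) − 4` for `t ≫ 0`; i.e. `e₀(I) = 12` and
`e₁(I) = 4`. -/
theorem stmt_11 (k : Type*) [Field k] (n : ℕ) (hn : 8 ≤ n)
    (A : Type*) [CommRing A] [Algebra k A]
    (q : MvPolynomial (Fin 2) k →ₐ[k] A) (hq : Function.Surjective q)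
    (hker : RingHom.ker q = Ideal.span {(X 1 : MvPolynomial (Fin 2) k) ^ 2 - X 0 ^ n})
    (x y : A) (hx : q (X 0) = x) (hy : q (X 1) = y)
    (m : Ideal A) (hm : m = Ideal.span {x, y}) (hmp : m.IsPrime)
    (R : Type*) [CommRing R] [Algebra A R]
    (hloc : IsLocalization (m.primeCompl (hp := hmp)) R) :
    ∃ N : ℕ, ∀ t ≥ N,
      moduleLength R
          (R ⧸ (Ideal.span {algebraMap A R (x ^ 6), algebraMap A R (x ^ 2 * y)}) ^ (t + 1)) =
        ((12 * (t + 1) - 4 : ℕ) : WithBot ℕ∞) := by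
  subst hm
  have hyx := sq_eq_pow_of_ker_eq hker hx hy
  have hbasis : Function.Bijective fun p : Polynomial k × Polynomial k ↦
      Polynomial.aeval x p.1 + Polynomial.aeval x p.2 * y :=
    ⟨injective_aeval_add_aeval_mul hker hx hy, surjective_aeval_add_aeval_mul hq hx hy hyx⟩
  refine ⟨0, fun t _ ↦ ?_⟩
  set T := monomialIdeal x y (6 * (t + 1)) (6 * t + 2)
  have hI : Ideal.span {algebraMap A R (x ^ 6), algebraMap A R (x ^ 2 * y)} ^ (t + 1) =
      T.map (algebraMap A R) := by
    have hT : monomialIdeal x y 6 2 ^ (t + 1) = T := monomialIdeal_pow hyx (by omega) t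
    rw [← hT, Ideal.map_pow, monomialIdeal, Ideal.map_span, Set.image_pair]
  have hunit (u : A) (hu : u ∈ (Ideal.span {x, y}).primeCompl) :
      IsUnit (Ideal.Quotient.mk T u) := by
    obtain ⟨⟨p₀, p₁⟩, rfl⟩ := hbasis.2 u
    have hmem := aeval_add_aeval_mul_sub_algebraMap_coeff_zero_mem x y p₀ p₁
    refine Ideal.isUnit_mk_of_sub_algebraMap_mem (span_le_radical_monomialIdeal hyx (by omega))
      (fun h0 ↦ hu ?_) hmem
    rwa [h0, map_zero, sub_zero] at hmem
  rw [moduleLength, ← Module.coe_length, hI, IsLocalization.length_quotient_map _ _ hunit,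
    length_quotient_monomialIdeal hyx hbasis (by omega) (by omega) (by omega)]
  norm_cast
  congr 1
  omega
end
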